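/- Fix 0 ≤ β < α < 1. For every j ≥ 0, α^j/(2 sqrt(j+1)) ≤ c_j^{α,β} ≤ α^j / ((1 - β/α) sqrt(j+1)), where c_j^{α,β} = sum_{i=0}^{j} α^i β^{j-i} r_i r_{j-i} and r_i = binom(2i,i)/4^i. -/

import Mathlib

noncomputable def r (i : ℕ) : ℝ := (Nat.choose (2*i) i : ℝ) / 4^i

lemma r_pos (i : ℕ) : 0 < r i := by
  unfold r
  have : 0 < Nat.choose (2*i) i := Nat.choose_pos (by omega)
  positivity

lemma r_succ (n : ℕ) : r (n+1) = r n * (2*n+1) / (2*n+2) := by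
  unfold r
  have h := Nat.succ_mul_centralBinom_succ n
  have h' : ((n+1) : ℝ) * (Nat.centralBinom (n+1) : ℝ) = 2*(2*n+1)*(Nat.centralBinom n) := by
    exact_mod_cast h
  unfold Nat.centralBinom at h'
  rw [show 2*(n+1) = 2*n+1+1 from by ring] at h' ⊢
  rw [pow_succ]
  field_simp
  linear_combination 2 * h'

lemma r_zero : r 0 = 1 := by unfold r; norm_num

lemma r_sq_le (i : ℕ) : (r i)^2 * (i+1) ≤ 1 := by
  induction i with
  | zero => rw [r_zero]; norm_num
  | succ n ih =>
    rw [r_succ]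
    have hn : (0:ℝ) ≤ n := Nat.cast_nonneg n
    have hr := (r_pos n).le
    push_cast
    rw [div_pow, div_mul_eq_mul_div, div_le_one (by positivity)]
    nlinarith [sq_nonneg (r n), sq_nonneg ((2:ℝ)*n+1)]

lemma r_sq_ge (i : ℕ) (hi : 1 ≤ i) : 1 ≤ 4*i*(r i)^2 := by
  induction i with
  | zero => omega
  | succ n ih =>
    rcases Nat.eq_or_lt_of_le hi with h | h
    · have : n = 0 := by omega
      subst this
      rw [r_succ, r_zero]; norm_num
    · have hn : 1 ≤ n := by omega
      have ihn := ih hn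
      rw [r_succ]
      have hn' : (1:ℝ) ≤ n := by exact_mod_cast hn
      have hr := (r_pos n).le
      push_cast
      rw [div_pow]
      rw [← sub_nonneg] at ihn ⊢
      have key : 4*((n:ℝ)+1)*((r n * (2*n+1))^2 / (2*n+2)^2) - 1 =
          (4*n*(r n)^2 - 1) * ((n+1)*(2*n+1)^2/(n*(2*n+2)^2))
          + ((n+1)*(2*n+1)^2 - n*(2*n+2)^2)/(n*(2*n+2)^2) := by
        field_simp
        ring
      rw [key]
      have h1 : (0:ℝ) ≤ (n+1)*(2*n+1)^2 - n*(2*n+2)^2 := by nlinarith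
      positivity

lemma r_le (i : ℕ) : r i ≤ 1 / Real.sqrt (i+1) := by
  have h1 : (0:ℝ) < (i:ℝ)+1 := by positivity
  have hs : 0 < Real.sqrt ((i:ℝ)+1) := Real.sqrt_pos.mpr h1
  rw [le_div_iff₀ hs]
  have h2 : (r i * Real.sqrt (i+1))^2 ≤ 1 := by
    rw [mul_pow, Real.sq_sqrt h1.le]
    exact r_sq_le i
  nlinarith [mul_pos (r_pos i) hs]

lemma r_ge (j : ℕ) : 1 / (2*Real.sqrt (j+1)) ≤ r j := by
  have h1 : (0:ℝ) < (j:ℝ)+1 := by positivity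
  have hs : 0 < Real.sqrt ((j:ℝ)+1) := Real.sqrt_pos.mpr h1
  rw [div_le_iff₀ (by positivity)]
  rcases Nat.eq_zero_or_pos j with h | h
  · subst h; rw [r_zero]
    norm_num [Real.sqrt_one]
  · have hsq := r_sq_ge j h
    have hj : (1:ℝ) ≤ j := by exact_mod_cast h
    have h2 : 1 ≤ (r j * (2*Real.sqrt (j+1)))^2 := by
      rw [mul_pow, mul_pow, Real.sq_sqrt h1.le]
      nlinarith [sq_nonneg (r j)]
    nlinarith [mul_pos (r_pos j) (show (0:ℝ) < 2*Real.sqrt (j+1) by positivity)]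

noncomputable def c (α β : ℝ) (j : ℕ) : ℝ :=
  ∑ i ∈ Finset.range (j + 1), α^i * β^(j - i) * r i * r (j - i)


lemma r_mul_le (i j : ℕ) (hij : i ≤ j) : r i * r (j-i) ≤ 1 / Real.sqrt (j+1) := by
  set k := j - i with hk
  have hjk : i + k = j := by omega
  have h1 : r i * r k ≤ (1/Real.sqrt (i+1)) * (1/Real.sqrt (k+1)) :=
    mul_le_mul (r_le i) (r_le k) (r_pos k).le (by positivity)
  refine h1.trans ?_
  rw [div_mul_div_comm, one_mul, ← Real.sqrt_mul (by positivity)]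
  apply one_div_le_one_div_of_le (Real.sqrt_pos.mpr (by positivity))
  apply Real.sqrt_le_sqrt
  have : (j:ℝ) = (i:ℝ) + (k:ℝ) := by exact_mod_cast hjk.symm
  rw [this]
  nlinarith [Nat.cast_nonneg (α := ℝ) i, Nat.cast_nonneg (α := ℝ) k]

theorem stmt_16 (α β : ℝ) (hβ0 : 0 ≤ β) (hβα : β < α) (hα1 : α < 1) (j : ℕ) :
    α^j / (2 * Real.sqrt (j + 1)) ≤ c α β j ∧
      c α β j ≤ α^j / ((1 - β / α) * Real.sqrt (j + 1)) := by
  have hα : 0 < α := lt_of_le_of_lt hβ0 hβα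
  set q := β / α with hq
  have hq0 : 0 ≤ q := div_nonneg hβ0 hα.le
  have hq1 : q < 1 := by rw [hq, div_lt_one hα]; exact hβα
  have hs : 0 < Real.sqrt ((j:ℝ)+1) := Real.sqrt_pos.mpr (by positivity)
  constructor
  · have hmem : j ∈ Finset.range (j+1) := Finset.self_mem_range_succ j
    have hsingle : α^j * β^(j-j) * r j * r (j-j) ≤ c α β j := by
      apply Finset.single_le_sum (f := fun i => α^i * β^(j-i) * r i * r (j-i)) _ hmem
      intro i _
      have := (r_pos i).le
      have := (r_pos (j-i)).le
      positivity
    rw [Nat.sub_self, pow_zero, r_zero] at hsingle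
    have h2 : α^j / (2 * Real.sqrt (j+1)) ≤ α^j * 1 * r j * 1 := by
      rw [mul_one, mul_one, div_eq_mul_one_div]
      exact mul_le_mul_of_nonneg_left (r_ge j) (by positivity)
    exact h2.trans hsingle
  · have hstep : c α β j ≤ ∑ i ∈ Finset.range (j+1), α^j * q^(j-i) * (1/Real.sqrt (j+1)) := by
      apply Finset.sum_le_sum
      intro i hi
      have hij : i ≤ j := by
        have := Finset.mem_range.mp hi; omega
      have hpow : α^i * α^(j-i) = α^j := by
        rw [← pow_add, show i + (j-i) = j from by omega]
      have hab : α^i * β^(j-i) = α^j * q^(j-i) := by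
        rw [hq, div_pow, mul_div_assoc', eq_div_iff (by positivity : (α:ℝ)^(j-i) ≠ 0)]
        linear_combination β^(j-i) * hpow
      have hterm : α^i * β^(j-i) * r i * r (j-i)
          = (α^j * q^(j-i)) * (r i * r (j-i)) := by rw [← hab]; ring
      rw [hterm]
      exact mul_le_mul_of_nonneg_left (r_mul_le i j hij) (by positivity)
    refine hstep.trans ?_
    have hreflect : ∑ i ∈ Finset.range (j+1), q^(j-i) = ∑ i ∈ Finset.range (j+1), q^i := by
      have := Finset.sum_range_reflect (fun i => q^i) (j+1)
      simpa using this
    have hgeom : ∑ i ∈ Finset.range (j+1), q^i ≤ 1/(1-q) := by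
      rw [geom_sum_eq (ne_of_lt hq1)]
      have h1 : (0:ℝ) < 1 - q := by linarith
      have : (q^(j+1) - 1)/(q-1) = (1 - q^(j+1))/(1-q) := by
        rw [div_eq_div_iff (by linarith) (by linarith)]; ring
      rw [this, div_le_div_iff₀ h1 h1]
      nlinarith [pow_nonneg hq0 (j+1)]
    have hsum : (∑ i ∈ Finset.range (j+1), α^j * q^(j-i) * (1/Real.sqrt (j+1)))
        = (∑ i ∈ Finset.range (j+1), q^(j-i)) * (α^j / Real.sqrt (j+1)) := by
      rw [Finset.sum_mul]
      apply Finset.sum_congr rfl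
      intros; ring
    rw [hsum, hreflect]
    calc (∑ i ∈ Finset.range (j+1), q^i) * (α^j / Real.sqrt (j+1))
        ≤ (1/(1-q)) * (α^j / Real.sqrt (j+1)) := by
          apply mul_le_mul_of_nonneg_right hgeom (by positivity)
      _ = α^j / ((1-q) * Real.sqrt (j+1)) := by
          rw [div_mul_div_comm, one_mul]
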